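/- arXiv:1511.00925 — 2 statements merged into one kernel-verified Lean document; each statement's English description precedes it below -/
import Mathlib

section
/- For every n ≥ 2 there exist generic unit-demand valuations for n buyers over m = n goods, each of supply 1, together with a Walrasian equilibrium (p,μ) whose price vector p is not a minimal Walrasian price vector, such that some good g has over-demand OD(g;p) = n − 1. -/
open Finset

noncomputable section

/-- Utility of an option for a unit-demand buyer: `none` means buying nothing. -/
def utilU {m : ℕ} (v p : Fin m → ℝ) : Option (Fin m) → ℝ
  | none => 0
  | some g => v g - p g

/-- Value of an option (the value of the good, or `0` for the empty option). -/
def vOpt {n m : ℕ} (v : Fin n → Fin m → ℝ) (q : Fin n) : Option (Fin m) → ℝ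
  | none => 0
  | some g => v q g

/-- Demand correspondence: the utility-maximizing options at prices `p`. -/
def DemU {m : ℕ} (v p : Fin m → ℝ) : Set (Option (Fin m)) :=
  {o | ∀ o', utilU v p o' ≤ utilU v p o}

/-- Walrasian equilibrium for unit-demand buyers with supplies `s`. -/
def IsWEU {n m : ℕ} (s : Fin m → ℕ) (v : Fin n → Fin m → ℝ)
    (p : Fin m → ℝ) (μ : Fin n → Option (Fin m)) : Prop :=
  (∀ g, (univ.filter fun q => μ q = some g).card ≤ s g) ∧
  (∀ q, μ q ∈ DemU (v q) p) ∧
  (∀ g, (univ.filter fun q => μ q = some g).card < s g → p g = 0)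

/-- `p` is a minimal Walrasian equilibrium price vector. -/
def IsMinimalWEPriceU {n m : ℕ} (s : Fin m → ℕ) (v : Fin n → Fin m → ℝ)
    (p : Fin m → ℝ) : Prop :=
  (∀ g, 0 ≤ p g) ∧ (∃ μ, IsWEU s v p μ) ∧
  ∀ p' : Fin m → ℝ, (∀ g, 0 ≤ p' g) → (∃ μ, IsWEU s v p' μ) → ∀ g, p g ≤ p' g

/-- Genericity: the values are linearly independent over `{-1,0,1}`. -/
def GenericU {n m : ℕ} (v : Fin n → Fin m → ℝ) : Prop :=
  ∀ α : Fin n → Fin m → ℤ,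
    (∀ q g, α q g = -1 ∨ α q g = 0 ∨ α q g = 1) →
    (∑ q, ∑ g, (α q g : ℝ) * v q g) = 0 →
    ∀ q g, α q g = 0

/-- Edge of the swap graph: a directed edge from node `a` to node `b` (nodes are
`some`-goods or the null node `none`), witnessed by a buyer allocated `a` who also
demands the good `b`.  There are no edges into the null node. -/
def SwapEdgeU {n m : ℕ} (v : Fin n → Fin m → ℝ) (p : Fin m → ℝ)
    (μ : Fin n → Option (Fin m)) (a b : Option (Fin m)) : Prop :=
  ∃ (q : Fin n) (g : Fin m), b = some g ∧ μ q = a ∧ b ∈ DemU (v q) p ∧ a ≠ b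

/-- Over-demand of good `g`: number of demanders beyond the supply (truncated at 0). -/
def overDemandU {n m : ℕ} (s : Fin m → ℕ) (v : Fin n → Fin m → ℝ)
    (p : Fin m → ℝ) (g : Fin m) : ℕ :=
  Nat.card {q : Fin n // some g ∈ DemU (v q) p} - s g

-- auxiliary ternary-independence machinery
lemma two_geom (E : ℕ) : 2 * ∑ k ∈ Finset.range E, (3:ℤ)^k = 3^E - 1 := by
  induction E with
  | zero => simp
  | succ E ih => rw [Finset.sum_range_succ, mul_add, ih, pow_succ]; ring

lemma ternary {ι : Type*} [Fintype ι] [DecidableEq ι] (e : ι → ℕ) (he : Function.Injective e)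
    (α : ι → ℤ) (hα : ∀ i, α i = -1 ∨ α i = 0 ∨ α i = 1)
    (hsum : ∑ i, α i * 3 ^ e i = 0) : ∀ i, α i = 0 := by
  by_contra hcon
  push_neg at hcon
  obtain ⟨i0, hi0⟩ := hcon
  classical
  set t := Finset.univ.filter (fun i => α i ≠ 0) with ht
  have htne : t.Nonempty := ⟨i0, by simp [ht, hi0]⟩
  obtain ⟨j, hjt, hjmax⟩ := Finset.exists_max_image t e htne
  have hsum_t : ∑ i ∈ t, α i * 3 ^ e i = 0 := by
    rw [ht, Finset.sum_filter_of_ne, hsum]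
    intro x _ hx h0
    apply hx; rw [h0, zero_mul]
  have hj3 : α j * 3 ^ e j + ∑ i ∈ t.erase j, α i * 3 ^ e i = 0 := by
    rw [← hsum_t]; exact Finset.add_sum_erase t (fun i => α i * 3 ^ e i) hjt
  have hαj : α j ≠ 0 := (Finset.mem_filter.mp hjt).2
  have habs1 : |α j * 3 ^ e j| = 3 ^ e j := by
    have h1 : |α j| = 1 := by rcases hα j with h | h | h <;> simp [h] at hαj ⊢
    rw [abs_mul, h1, one_mul, abs_of_nonneg (by positivity)]
  have habs : (3:ℤ) ^ e j ≤ |∑ i ∈ t.erase j, α i * 3 ^ e i| := by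
    have heq : α j * 3 ^ e j = -∑ i ∈ t.erase j, α i * 3 ^ e i := by linarith
    rw [← habs1, heq, abs_neg]
  have hbound : |∑ i ∈ t.erase j, α i * 3 ^ e i| ≤ ∑ i ∈ t.erase j, (3:ℤ) ^ e i := by
    refine (Finset.abs_sum_le_sum_abs _ _).trans ?_
    apply Finset.sum_le_sum
    intro i _
    rcases hα i with h | h | h <;> simp [h, abs_of_nonneg, pow_nonneg]
  have himg : ∑ i ∈ t.erase j, (3:ℤ) ^ e i = ∑ k ∈ (t.erase j).image e, (3:ℤ)^k := by
    rw [Finset.sum_image (fun a _ b _ hab => he hab)]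
  have hsub : (t.erase j).image e ⊆ Finset.range (e j) := by
    intro k hk
    rw [Finset.mem_image] at hk
    obtain ⟨i, hi, rfl⟩ := hk
    have hij : i ≠ j := Finset.ne_of_mem_erase hi
    have hle := hjmax i (Finset.mem_of_mem_erase hi)
    rw [Finset.mem_range]
    exact lt_of_le_of_ne hle (fun h => hij (he h))
  have hsum2 : ∑ k ∈ (t.erase j).image e, (3:ℤ)^k ≤ ∑ k ∈ Finset.range (e j), 3^k :=
    Finset.sum_le_sum_of_subset_of_nonneg hsub (by intros; positivity)
  have hg := two_geom (e j)
  have hpos : (0:ℤ) < 3 ^ e j := by positivity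
  linarith

-- the explicit example
def eE (n : ℕ) (q g : Fin n) : ℕ :=
  if (g:ℕ) = 0 then n*n + 2*(q:ℕ) else if g = q then n*n + 2*(q:ℕ)+1 else (q:ℕ)*n + (g:ℕ)

def vE (n : ℕ) (q g : Fin n) : ℝ := 3 ^ eE n q g

def pE (n : ℕ) (g : Fin n) : ℝ :=
  if (g:ℕ) = 0 then 1 else 3^(n*n+2*(g:ℕ)+1) - 3^(n*n+2*(g:ℕ)) + 1

lemma small_lt {n q g : ℕ} (hq : q < n) (hg : g < n) : q*n+g < n*n := by nlinarith

lemma small_eq {n q g q' g' : ℕ} (hg : g < n) (hg' : g' < n) (h : q*n+g = q'*n+g') :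
    q = q' ∧ g = g' := by
  have hn : 0 < n := by omega
  have h1 : q = q' := by
    have h2 := congrArg (· / n) h
    simpa [mul_comm, Nat.mul_add_div hn, Nat.div_eq_of_lt hg, Nat.div_eq_of_lt hg'] using h2
  subst h1
  exact ⟨rfl, Nat.add_left_cancel h⟩

lemma eE_inj_val {n : ℕ} {q g q' g' : Fin n} (h : eE n q g = eE n q' g') :
    q = q' ∧ g = g' := by
  have hb : (q:ℕ)*n + (g:ℕ) < n*n := small_lt q.isLt g.isLt
  have hb' : (q':ℕ)*n + (g':ℕ) < n*n := small_lt q'.isLt g'.isLt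
  unfold eE at h
  split_ifs at h with c1 d1 d1 c2 d1 d2 d1 d2
  all_goals try (obtain ⟨h1, h2⟩ := small_eq g.isLt g'.isLt h; exact ⟨Fin.ext h1, Fin.ext h2⟩)
  all_goals try (have c2' : (g:ℕ) = (q:ℕ) := congrArg Fin.val c2)
  all_goals try (have d2' : (g':ℕ) = (q':ℕ) := congrArg Fin.val d2)
  all_goals try (generalize hA : (q:ℕ)*n = A at h hb)
  all_goals try (generalize hA : (q:ℕ)*n = A at hb)
  all_goals try (generalize hB : (q':ℕ)*n = B at h hb')
  all_goals try (generalize hB : (q':ℕ)*n = B at hb')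
  all_goals generalize hN : n*n = N at h hb hb'
  all_goals refine ⟨Fin.ext ?_, Fin.ext ?_⟩ <;> omega

lemma pow3_mono {a b : ℕ} (h : a ≤ b) : (3:ℝ)^a ≤ 3^b :=
  pow_le_pow_right₀ (by norm_num) h

lemma util_le (n : ℕ) (q h : Fin n) :
    utilU (vE n q) (pE n) (some h) ≤ (3:ℝ)^(n*n+2*(q:ℕ)) - 1 := by
  show vE n q h - pE n h ≤ _
  unfold vE pE eE
  by_cases h0 : (h:ℕ) = 0
  · simp only [h0, if_pos rfl, if_true]
    norm_num
  · rw [if_neg h0, if_neg h0]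
    by_cases hq : h = q
    · subst hq
      rw [if_pos rfl]
      ring_nf
      norm_num
    · rw [if_neg hq]
      have h1 : (3:ℝ)^((q:ℕ)*n+(h:ℕ)) ≤ 3^(n*n+2*(q:ℕ)) :=
        pow3_mono (by have := small_lt q.isLt h.isLt; omega)
      have h2 : (3:ℝ)^(n*n+2*(h:ℕ)) ≤ 3^(n*n+2*(h:ℕ)+1) := pow3_mono (by omega)
      linarith

lemma util_eq (n : ℕ) (q : Fin n) :
    utilU (vE n q) (pE n) (some q) = (3:ℝ)^(n*n+2*(q:ℕ)) - 1 := by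
  show vE n q q - pE n q = _
  unfold vE pE eE
  by_cases h0 : (q:ℕ) = 0
  · simp [h0]
  · rw [if_neg h0, if_neg h0, if_pos rfl]
    ring

lemma util_zero (n : ℕ) (q g0 : Fin n) (hg0 : (g0:ℕ) = 0) :
    utilU (vE n q) (pE n) (some g0) = (3:ℝ)^(n*n+2*(q:ℕ)) - 1 := by
  show vE n q g0 - pE n g0 = _
  unfold vE pE eE
  rw [if_pos hg0, if_pos hg0]

lemma util_pos (n : ℕ) (q : Fin n) : (0:ℝ) ≤ (3:ℝ)^(n*n+2*(q:ℕ)) - 1 := by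
  have : (1:ℝ) ≤ 3^(n*n+2*(q:ℕ)) := one_le_pow₀ (by norm_num)
  linarith

lemma pE_ge_one (n : ℕ) (g : Fin n) : 1 ≤ pE n g := by
  unfold pE
  split_ifs with h
  · exact le_rfl
  · have : (3:ℝ)^(n*n+2*(g:ℕ)) ≤ 3^(n*n+2*(g:ℕ)+1) := pow3_mono (by omega)
    linarith

lemma muE_card (n : ℕ) (g : Fin n) :
    (univ.filter fun q : Fin n => (some q : Option (Fin n)) = some g).card = 1 := by
  have : (univ.filter fun q : Fin n => (some q : Option (Fin n)) = some g) = {g} := by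
    ext q; simp [eq_comm]
  rw [this, Finset.card_singleton]

lemma demE (n : ℕ) (q : Fin n) : some q ∈ DemU (vE n q) (pE n) := by
  intro o
  rw [util_eq]
  match o with
  | none => exact util_pos n q
  | some h => exact util_le n q h

lemma demE_zero (n : ℕ) (q g0 : Fin n) (hg0 : (g0:ℕ) = 0) :
    some g0 ∈ DemU (vE n q) (pE n) := by
  intro o
  rw [util_zero n q g0 hg0]
  match o with
  | none => exact util_pos n q
  | some h => exact util_le n q h

lemma demE' (n : ℕ) (q : Fin n) : some q ∈ DemU (vE n q) (fun g => pE n g - 1/2) := by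
  intro o
  have he : utilU (vE n q) (fun g => pE n g - 1/2) (some q)
      = (3:ℝ)^(n*n+2*(q:ℕ)) - 1 + 1/2 := by
    show vE n q q - (pE n q - 1/2) = _
    have := util_eq n q
    show _ = _
    have h2 : vE n q q - pE n q = (3:ℝ)^(n*n+2*(q:ℕ)) - 1 := this
    linarith
  rw [he]
  match o with
  | none => have := util_pos n q; show (0:ℝ) ≤ _; linarith
  | some h =>
      have h1 := util_le n q h
      show vE n q h - (pE n h - 1/2) ≤ _
      have h2 : vE n q h - pE n h ≤ (3:ℝ)^(n*n+2*(q:ℕ)) - 1 := h1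
      linarith

/-- for every `n ≥ 2` there are generic unit-demand valuations over `n`
goods of unit supply, and a Walrasian equilibrium `(p, μ)` whose price vector is *not*
minimal, at which some good has over-demand `n - 1`. -/
theorem stmt17 (n : ℕ) (hn : 2 ≤ n) :
    ∃ (v : Fin n → Fin n → ℝ) (p : Fin n → ℝ) (μ : Fin n → Option (Fin n)),
      (∀ q g, 0 ≤ v q g) ∧ GenericU v ∧ (∀ g, 0 ≤ p g) ∧
      IsWEU (fun _ => 1) v p μ ∧
      ¬ IsMinimalWEPriceU (fun _ => 1) v p ∧
      ∃ g : Fin n, overDemandU (fun _ => 1) v p g = n - 1 := by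
  classical
  refine ⟨vE n, pE n, fun q => some q, ?_, ?_, ?_, ?_, ?_, ?_⟩
  · intro q g; unfold vE; positivity
  · -- genericity
    intro α hα hsum q g
    have hinj : Function.Injective (fun i : Fin n × Fin n => eE n i.1 i.2) := by
      intro a b hab
      obtain ⟨h1, h2⟩ := eE_inj_val hab
      exact Prod.ext h1 h2
    have hz : ((∑ i : Fin n × Fin n, α i.1 i.2 * 3 ^ eE n i.1 i.2 : ℤ) : ℝ) = 0 := by
      push_cast
      rw [Fintype.sum_prod_type]
      simpa [vE] using hsum
    have hz' : (∑ i : Fin n × Fin n, α i.1 i.2 * 3 ^ eE n i.1 i.2 : ℤ) = 0 := by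
      exact_mod_cast hz
    exact ternary _ hinj (fun i => α i.1 i.2) (fun i => hα i.1 i.2) hz' (q, g)
  · intro g; linarith [pE_ge_one n g]
  · refine ⟨?_, ?_, ?_⟩
    · intro g; rw [muE_card]
    · intro q; exact demE n q
    · intro g h; rw [muE_card] at h; simp at h
  · rintro ⟨-, -, hmin⟩
    have hWE' : IsWEU (fun _ => 1) (vE n) (fun g => pE n g - 1/2) (fun q => some q) := by
      refine ⟨?_, ?_, ?_⟩
      · intro g; rw [muE_card]
      · intro q; exact demE' n q
      · intro g h; rw [muE_card] at h; simp at h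
    have hle := hmin (fun g => pE n g - 1/2)
      (fun g => by have := pE_ge_one n g; linarith)
      ⟨fun q => some q, hWE'⟩ ⟨0, by omega⟩
    have hp : pE n ⟨0, by omega⟩ = 1 := by unfold pE; simp
    have hle' : pE n ⟨0, by omega⟩ ≤ pE n ⟨0, by omega⟩ - 1/2 := hle
    linarith
  · refine ⟨⟨0, by omega⟩, ?_⟩
    unfold overDemandU
    have hall : ∀ q : Fin n, some (⟨0, by omega⟩ : Fin n) ∈ DemU (vE n q) (pE n) :=
      fun q => demE_zero n q _ rfl
    have : Nat.card {q : Fin n // some (⟨0, by omega⟩ : Fin n) ∈ DemU (vE n q) (pE n)} = n := by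
      rw [Nat.card_congr (Equiv.subtypeUnivEquiv hall), Nat.card_eq_fintype_card,
        Fintype.card_fin]
    rw [this]

end
end

section
/- There exist m unit-demand valuations v_1,…,v_m over m goods and a distinguished good g with the following shattering property: for every subset T ⊆ {1,…,m} there is a price vector p ∈ (ℝ≥0)^m such that each buyer q has a unique utility-maximizing option at p, and this unique option is the good g if q ∈ T, and is different from g if q ∉ T. Consequently, the class H_g = {h_{g,p} : p ∈ (ℝ≥0)^m} of good-g demand indicator functions over unit-demand valuations has VC dimension at least m. -/
open Finset

noncomputable section

lemma demU_singleton {m : ℕ} (v p : Fin m → ℝ) (o : Option (Fin m))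
    (h : ∀ o', o' ≠ o → utilU v p o' < utilU v p o) :
    DemU v p = {o} := by
  ext o'
  simp only [DemU, Set.mem_setOf_eq, Set.mem_singleton_iff]
  constructor
  · intro hmem
    by_contra hne
    exact absurd (hmem o) (not_le.mpr (h o' hne))
  · intro heq o''
    rw [heq]
    rcases eq_or_ne o'' o with rfl | hne
    · exact le_rfl
    · exact (h o'' hne).le

/-- there are `m` unit-demand valuations and a distinguished good `g`
such that for every subset `T` of the buyers, some nonnegative price vector makes each
buyer's utility-maximizing option unique, with that option equal to `g` exactly for the
buyers in `T`.  Consequently the class `H_g` of good-`g` demand indicators (one function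
per price vector) shatters a set of `m` unit-demand valuations, so its VC dimension is
at least `m`. -/
theorem stmt18 (m : ℕ) (hm : 1 ≤ m) :
    ∃ (v : Fin m → Fin m → ℝ) (g : Fin m),
      (∀ q h, 0 ≤ v q h) ∧
      ∀ T : Finset (Fin m), ∃ p : Fin m → ℝ, (∀ h, 0 ≤ p h) ∧
        ∀ q : Fin m, ∃ o : Option (Fin m),
          DemU (v q) p = {o} ∧ (o = some g ↔ q ∈ T) := by
  have hg0 : (0:ℕ) < m := hm
  set g : Fin m := ⟨0, hg0⟩ with hgdef
  refine ⟨fun q h => if q = g then (if h = g then 1 else 0)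
      else (if h = g then 2 else if h = q then 3 else 0), g, ?_, ?_⟩
  · intro q h
    dsimp only
    split_ifs <;> norm_num
  intro T
  refine ⟨fun h => if h = g then (if g ∈ T then 1/2 else 3/2)
      else (if h ∈ T then 4 else 1), ?_, ?_⟩
  · intro h
    dsimp only
    split_ifs <;> norm_num
  intro q
  refine ⟨if q ∈ T then some g else if q = g then none else some q, ?_, ?_⟩
  · apply demU_singleton
    intro o' hne
    by_cases hq : q ∈ T <;> by_cases hqg : q = g
    · -- q ∈ T, q = g : o = some g, utility 1 - 1/2 = 1/2
      have hgT : g ∈ T := hqg ▸ hq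
      match o' with
      | none => simp [utilU, hq, hqg, hgT] <;> norm_num
      | some h =>
        have hhg : h ≠ g := by
          intro h'; subst h'; simp [hq] at hne
        by_cases hhT : h ∈ T <;>
          simp [utilU, hq, hqg, hgT, hhg, hhT] <;> norm_num
    · -- q ∈ T, q ≠ g : o = some g, utility 2 - p_g ≥ 1/2
      match o' with
      | none =>
        by_cases hgT : g ∈ T <;>
          simp [utilU, hq, hqg, hgT] <;> norm_num
      | some h =>
        have hhg : h ≠ g := by
          intro h'; subst h'; simp [hq] at hne
        by_cases hgT : g ∈ T <;> by_cases hhq : h = q <;> by_cases hhT : h ∈ T <;>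
          simp_all [utilU] <;> norm_num
    · -- q ∉ T, q = g : o = none, utility 0
      have hgT : g ∉ T := hqg ▸ hq
      match o' with
      | none => exact absurd (by simp [hqg, hgT]) hne
      | some h =>
        by_cases hhg : h = g <;> by_cases hhT : h ∈ T <;>
          simp_all [utilU] <;> norm_num
    · -- q ∉ T, q ≠ g : o = some q, utility 3 - 1 = 2
      match o' with
      | none => simp [utilU, hq, hqg] <;> norm_num
      | some h =>
        have hhq : h ≠ q := by
          intro h'; subst h'; simp [hq, hqg] at hne
        by_cases hhg : h = g <;> by_cases hgT : g ∈ T <;> by_cases hhT : h ∈ T <;>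
          simp_all [utilU] <;> norm_num
  · by_cases hq : q ∈ T <;> by_cases hqg : q = g <;> simp [hq, hqg]

end
end
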